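/- arXiv:0912.4045 — 2 statements merged into one kernel-verified Lean document; each statement's English description precedes it below -/
import Mathlib

section
/- Let Y = Xβ + ε with β supported on S, |S| ≤ s, and let β̂ minimize (1/2n)‖Y − Xβ'‖₂² + λ_n‖β'‖₁. Set υ = β̂ − β. If ‖X^T ε / n‖_∞ ≤ λ_n / 2, then ‖υ_{Sᶜ}‖₁ ≤ 3‖υ_S‖₁. -/
/-! Comparing the Lasso objective at `β̂` with its value at `β` gives the basic inequality
`(1/2n)‖Xυ‖² ≤ ⟨Xᵀε/n, υ⟩ + λ(‖β‖₁ - ‖β̂‖₁)`. Hölder bounds the cross term by `(λ/2)‖υ‖₁`, and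
since `β` vanishes off `S`, `‖β‖₁ - ‖β + υ‖₁ ≤ ‖υ_S‖₁ - ‖υ_{Sᶜ}‖₁`. Together,
`0 ≤ (λ/2)(3‖υ_S‖₁ - ‖υ_{Sᶜ}‖₁)`. -/

open Finset

noncomputable def l1 {p : ℕ} (v : Fin p → ℝ) : ℝ := ∑ i, |v i|
noncomputable def l2 {n : ℕ} (v : Fin n → ℝ) : ℝ := Real.sqrt (∑ i, (v i) ^ 2)

def restr {p : ℕ} (T : Finset (Fin p)) (v : Fin p → ℝ) : Fin p → ℝ :=
  fun i => if i ∈ T then v i else 0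

open Matrix

noncomputable def lassoObjective {n p : ℕ} (X : Matrix (Fin n) (Fin p) ℝ) (Y : Fin n → ℝ)
    (lam : ℝ) (b : Fin p → ℝ) : ℝ :=
  (1 / (2 * n)) * (l2 (Y - X.mulVec b)) ^ 2 + lam * l1 b

lemma l2_sq {n : ℕ} (v : Fin n → ℝ) : l2 v ^ 2 = v ⬝ᵥ v := by
  rw [l2, Real.sq_sqrt (sum_nonneg fun i _ => sq_nonneg _)]
  simp only [dotProduct, sq]

lemma l1_eq_l1_restr_add_l1_restr_compl {p : ℕ} (T : Finset (Fin p)) (v : Fin p → ℝ) :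
    l1 v = l1 (restr T v) + l1 (restr Tᶜ v) := by
  rw [l1, l1, l1, ← sum_add_distrib]
  refine sum_congr rfl fun i _ => ?_
  by_cases hi : i ∈ T <;> simp [restr, hi]

lemma l1_sub_l1_add_le {p : ℕ} (T : Finset (Fin p)) {β : Fin p → ℝ} (hβ : ∀ j ∉ T, β j = 0)
    (υ : Fin p → ℝ) : l1 β - l1 (β + υ) ≤ l1 (restr T υ) - l1 (restr Tᶜ υ) := by
  simp only [l1, ← sum_sub_distrib]
  refine sum_le_sum fun j _ => ?_
  by_cases hj : j ∈ T
  · have := abs_sub_abs_le_abs_sub (β j) (β j + υ j)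
    simp_all [restr]
  · simp [restr, hj, hβ j hj]

lemma dotProduct_le_mul_l1 {p : ℕ} {w : Fin p → ℝ} {c : ℝ} (hw : ∀ j, |w j| ≤ c)
    (v : Fin p → ℝ) : w ⬝ᵥ v ≤ c * l1 v := by
  rw [l1, mul_sum]
  refine sum_le_sum fun j _ => (le_abs_self _).trans ?_
  rw [abs_mul]
  exact mul_le_mul_of_nonneg_right (hw j) (abs_nonneg _)

lemma dotProduct_mulVec_div_le {n p : ℕ} (X : Matrix (Fin n) (Fin p) ℝ) (ε : Fin n → ℝ)
    {d c : ℝ} (hnoise : ∀ j, |(∑ i, X i j * ε i) / d| ≤ c) (v : Fin p → ℝ) :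
    ε ⬝ᵥ X *ᵥ v / d ≤ c * l1 v := by
  have hdual : ε ⬝ᵥ X *ᵥ v / d = (fun j => (∑ i, X i j * ε i) / d) ⬝ᵥ v := by
    rw [dotProduct_mulVec]
    simp only [dotProduct, vecMul, sum_div, sum_mul]
    exact sum_congr rfl fun j _ => sum_congr rfl fun i _ => by ring
  exact hdual ▸ dotProduct_le_mul_l1 hnoise v

lemma lasso_basic_inequality {n p : ℕ} (X : Matrix (Fin n) (Fin p) ℝ) (β βhat : Fin p → ℝ)
    (ε : Fin n → ℝ) (lam : ℝ)
    (hopt : lassoObjective X (X *ᵥ β + ε) lam βhat ≤ lassoObjective X (X *ᵥ β + ε) lam β) :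
    (1 / (2 * n)) * l2 (X *ᵥ (βhat - β)) ^ 2
      ≤ ε ⬝ᵥ X *ᵥ (βhat - β) / n + lam * (l1 β - l1 βhat) := by
  set w := X *ᵥ (βhat - β)
  have hres : X *ᵥ β + ε - X *ᵥ βhat = ε - w := by simp only [w, mulVec_sub]; abel
  have hexpand : (ε - w) ⬝ᵥ (ε - w) = ε ⬝ᵥ ε - 2 * ε ⬝ᵥ w + w ⬝ᵥ w := by
    simp only [sub_dotProduct, dotProduct_sub, dotProduct_comm w ε]; ring
  rw [lassoObjective, lassoObjective, hres, add_sub_cancel_left, l2_sq, l2_sq, hexpand] at hopt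
  rw [l2_sq]
  linear_combination hopt

theorem stmt14_general (n p : ℕ)
    (X : Matrix (Fin n) (Fin p) ℝ) (β βhat ε : _) (Y : Fin n → ℝ) (lam : ℝ)
    (hlam : 0 < lam)
    (hY : Y = X.mulVec β + ε)
    (S : Finset (Fin p)) (hS : S = Finset.univ.filter fun j => β j ≠ 0)
    -- β̂ minimizes the Lasso objective
    (hopt : ∀ b : Fin p → ℝ,
      (1 / (2 * n)) * (l2 (Y - X.mulVec βhat)) ^ 2 + lam * l1 βhat ≤
        (1 / (2 * n)) * (l2 (Y - X.mulVec b)) ^ 2 + lam * l1 b)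
    -- ‖X^T ε / n‖_∞ ≤ λ/2
    (hnoise : ∀ j, |(∑ i, X i j * ε i) / n| ≤ lam / 2) :
    l1 (restr Sᶜ (βhat - β)) ≤ 3 * l1 (restr S (βhat - β)) := by
  subst hY
  have hβ : ∀ j ∉ S, β j = 0 := by simp [hS]
  have hbasic := lasso_basic_inequality X β βhat ε lam (hopt β)
  have hcross := dotProduct_mulVec_div_le X ε hnoise (βhat - β)
  have hdecomp := mul_le_mul_of_nonneg_left (l1_sub_l1_add_le S hβ (βhat - β)) hlam.le
  rw [add_sub_cancel] at hdecomp
  rw [l1_eq_l1_restr_add_l1_restr_compl S] at hcross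
  have hquad : 0 ≤ (1 / (2 * n)) * l2 (X *ᵥ (βhat - β)) ^ 2 := by positivity
  have hcone : 0 ≤ lam * (3 * l1 (restr S (βhat - β)) - l1 (restr Sᶜ (βhat - β))) := by
    linarith
  linarith [(mul_nonneg_iff_of_pos_left hlam).mp hcone]

/-- the Lasso error satisfies the cone constraint
‖υ_{Sᶜ}‖₁ ≤ 3‖υ_S‖₁ when ‖X^Tε/n‖_∞ ≤ λ/2. -/
theorem stmt14 (n p s : ℕ) (hn : 1 ≤ n)
    (X : Matrix (Fin n) (Fin p) ℝ) (β βhat ε : _) (Y : Fin n → ℝ) (lam : ℝ)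
    (hlam : 0 < lam)
    (hY : Y = X.mulVec β + ε)
    (S : Finset (Fin p)) (hS : S = Finset.univ.filter fun j => β j ≠ 0)
    (hScard : S.card ≤ s)
    -- β̂ minimizes the Lasso objective
    (hopt : ∀ b : Fin p → ℝ,
      (1 / (2 * n)) * (l2 (Y - X.mulVec βhat)) ^ 2 + lam * l1 βhat ≤
        (1 / (2 * n)) * (l2 (Y - X.mulVec b)) ^ 2 + lam * l1 b)
    -- ‖X^T ε / n‖_∞ ≤ λ/2
    (hnoise : ∀ j, |(∑ i, X i j * ε i) / n| ≤ lam / 2) :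
    l1 (restr Sᶜ (βhat - β)) ≤ 3 * l1 (restr S (βhat - β)) :=
  stmt14_general n p X β βhat ε Y lam hlam hY S hS hopt hnoise
end

section
/- Suppose the n×p matrix X satisfies RE(s,1,X) with constant K = K(s,1,X) > 0, Y = Xβ + ε with |supp(β)| ≤ s, ‖X_j‖₂ ≤ (1+θ)√n, and β̂ solves the Dantzig selector with parameter λ_n ≥ ‖X^Tε/n‖_∞. Then υ = β̂ − β satisfies: ‖υ_S‖₂ ≤ 4K²λ_n√s, ‖υ‖₁ ≤ 8K²λ_n s, and ‖υ‖₂ ≤ 12K²λ_n√s. -/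
/-!
Write `υ = β̂ - β`. Optimality of `β̂` against the feasible point `β` gives the cone condition
`‖υ_{Sᶜ}‖₁ ≤ ‖υ_S‖₁`, and feasibility of both gives `‖XᵀXυ‖_∞ ≤ 2λn`, hence
`‖Xυ‖₂² ≤ 2λn‖υ‖₁ ≤ 4λn√s‖υ_S‖₂`. RE on `S` turns this into `‖υ_S‖₂ ≤ 4K²λ√s`, and the cone
condition gives the `ℓ¹` bound. For the `ℓ²` bound, apply RE to a set `T` of at most `s`
indices carrying the largest `ℓ¹` mass of `υ`: it satisfies the cone condition too, and every
entry off `T` is at most the average of `|υ|` on `T`, so `‖υ_{Tᶜ}‖₂ ≤ ‖υ_T‖₂ ≤ 4K²λ√s`.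
-/

open Finset

section Norms

variable {p : ℕ}

lemma l1_nonneg (v : Fin p → ℝ) : 0 ≤ l1 v :=
  sum_nonneg fun _ _ => abs_nonneg _

lemma l2_nonneg (v : Fin p → ℝ) : 0 ≤ l2 v := Real.sqrt_nonneg _

lemma sq_l2 (v : Fin p → ℝ) : l2 v ^ 2 = ∑ i, v i ^ 2 :=
  Real.sq_sqrt (sum_nonneg fun _ _ => sq_nonneg _)

lemma l2_le_l1 (v : Fin p → ℝ) : l2 v ≤ l1 v :=
  Real.sqrt_le_iff.2 ⟨l1_nonneg v, by
    simpa only [sq_abs, l1] using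
      sum_sq_le_sq_sum_of_nonneg (s := univ) fun i _ => abs_nonneg (v i)⟩

lemma l1_restr (T : Finset (Fin p)) (v : Fin p → ℝ) : l1 (restr T v) = ∑ i ∈ T, |v i| := by
  simp [l1, restr, apply_ite, sum_ite_mem]

lemma sq_l2_restr (T : Finset (Fin p)) (v : Fin p → ℝ) :
    l2 (restr T v) ^ 2 = ∑ i ∈ T, v i ^ 2 := by
  simp [sq_l2, restr, sum_ite_mem]

lemma l1_restr_add_l1_restr_compl (T : Finset (Fin p)) (v : Fin p → ℝ) :
    l1 (restr T v) + l1 (restr Tᶜ v) = l1 v := by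
  rw [l1_restr, l1_restr, sum_add_sum_compl, l1]

lemma l2_le_l2_restr_add_l2_restr_compl (T : Finset (Fin p)) (v : Fin p → ℝ) :
    l2 v ≤ l2 (restr T v) + l2 (restr Tᶜ v) := by
  have hsplit : l2 v ^ 2 = l2 (restr T v) ^ 2 + l2 (restr Tᶜ v) ^ 2 := by
    rw [sq_l2, sq_l2_restr, sq_l2_restr, sum_add_sum_compl]
  nlinarith [l2_nonneg v, l2_nonneg (restr T v), l2_nonneg (restr Tᶜ v),
    mul_nonneg (l2_nonneg (restr T v)) (l2_nonneg (restr Tᶜ v))]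

lemma l1_restr_le_sqrt_card_mul_l2_restr (T : Finset (Fin p)) (v : Fin p → ℝ) :
    l1 (restr T v) ≤ √(#T : ℝ) * l2 (restr T v) := by
  rw [← Real.sqrt_sq (l2_nonneg _), ← Real.sqrt_mul (Nat.cast_nonneg _), sq_l2_restr, l1_restr]
  refine Real.le_sqrt_of_sq_le ?_
  simpa only [sq_abs] using sq_sum_le_card_mul_sum_sq (s := T) (f := fun i => |v i|)

end Norms

section TopSet

variable {ι : Type*}

lemma exists_card_le_forall_sum_le [Fintype ι] (f : ι → ℝ) (k : ℕ) :
    ∃ T : Finset ι, #T ≤ k ∧ ∀ T' : Finset ι, #T' ≤ k → ∑ i ∈ T', f i ≤ ∑ i ∈ T, f i := by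
  obtain ⟨T, hT, hmax⟩ := exists_max_image ((univ : Finset (Finset ι)).filter (#· ≤ k))
    (fun T => ∑ i ∈ T, f i) ⟨∅, by simp⟩
  exact ⟨T, (mem_filter.1 hT).2, fun T' hT' => hmax T' (by simpa using hT')⟩

/-- Exchanging `j ∈ T` for a larger `f i` would increase the mass of `T`. -/
lemma le_of_forall_card_le_sum_le [DecidableEq ι] {f : ι → ℝ} {k : ℕ} {T : Finset ι} (hT : #T ≤ k)
    (hmax : ∀ T' : Finset ι, #T' ≤ k → ∑ i ∈ T', f i ≤ ∑ i ∈ T, f i)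
    {i j : ι} (hi : i ∉ T) (hj : j ∈ T) : f i ≤ f j := by
  have hi' : i ∉ T.erase j := fun h => hi (mem_of_mem_erase h)
  have hcard : #(insert i (T.erase j)) ≤ k := by
    rw [card_insert_of_notMem hi', card_erase_of_mem hj]
    have := card_pos.2 ⟨j, hj⟩
    omega
  have := hmax _ hcard
  rw [sum_insert hi', sum_erase_eq_sub hj] at this
  linarith

lemma l2_restr_compl_le_l2_restr {p : ℕ} {T : Finset (Fin p)} {v : Fin p → ℝ}
    (htop : ∀ i ∉ T, ∀ j ∈ T, |v i| ≤ |v j|) (hcone : l1 (restr Tᶜ v) ≤ l1 (restr T v)) :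
    l2 (restr Tᶜ v) ≤ l2 (restr T v) := by
  rcases T.eq_empty_or_nonempty with rfl | hT
  · calc l2 (restr ∅ᶜ v) ≤ l1 (restr ∅ᶜ v) := l2_le_l1 _
      _ ≤ l1 (restr ∅ v) := hcone
      _ = 0 := by simp [l1_restr]
      _ ≤ _ := l2_nonneg _
  have hmass : ∀ i ∉ T, #T * |v i| ≤ l1 (restr T v) := fun i hi => by
    simpa [l1_restr] using card_nsmul_le_sum T (fun j => |v j|) (|v i|) (htop i hi)
  have hmul : #T * l2 (restr Tᶜ v) ^ 2 ≤ #T * l2 (restr T v) ^ 2 := calc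
    #T * l2 (restr Tᶜ v) ^ 2 = ∑ i ∈ Tᶜ, |v i| * (#T * |v i|) := by
      rw [sq_l2_restr, mul_sum]
      exact sum_congr rfl fun i _ => by rw [← sq_abs]; ring
    _ ≤ ∑ i ∈ Tᶜ, |v i| * l1 (restr T v) := sum_le_sum fun i hi =>
      mul_le_mul_of_nonneg_left (hmass i (mem_compl.1 hi)) (abs_nonneg _)
    _ = l1 (restr Tᶜ v) * l1 (restr T v) := by rw [l1_restr Tᶜ, sum_mul]
    _ ≤ l1 (restr T v) ^ 2 := by rw [sq]; exact mul_le_mul_of_nonneg_right hcone (l1_nonneg _)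
    _ ≤ (√(#T : ℝ) * l2 (restr T v)) ^ 2 :=
      pow_le_pow_left₀ (l1_nonneg _) (l1_restr_le_sqrt_card_mul_l2_restr T v) 2
    _ = #T * l2 (restr T v) ^ 2 := by rw [mul_pow, Real.sq_sqrt (Nat.cast_nonneg _)]
  exact (pow_le_pow_iff_left₀ (l2_nonneg _) (l2_nonneg _) two_ne_zero).1
    (le_of_mul_le_mul_left hmul (by exact_mod_cast hT.card_pos))

end TopSet

section RestrictedEigenvalue

open Matrix

variable {n p : ℕ}

/-- `RE(s, c₀, X)` holds with `K(s, c₀, X) ≤ K`. -/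
def RestrictedEigenvalue (X : Matrix (Fin n) (Fin p) ℝ) (s : ℕ) (c₀ K : ℝ) : Prop :=
  ∀ J0 : Finset (Fin p), J0.card ≤ s → ∀ v : Fin p → ℝ, v ≠ 0 →
    l1 (restr J0ᶜ v) ≤ c₀ * l1 (restr J0 v) →
    Real.sqrt n * l2 (restr J0 v) ≤ K * l2 (X.mulVec v)

lemma RestrictedEigenvalue.mul_sq_l2_restr_le {X : Matrix (Fin n) (Fin p) ℝ} {s : ℕ} {c₀ K : ℝ}
    (hRE : RestrictedEigenvalue X s c₀ K) {J : Finset (Fin p)} (hJ : #J ≤ s) {v : Fin p → ℝ}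
    (hcone : l1 (restr Jᶜ v) ≤ c₀ * l1 (restr J v)) :
    n * l2 (restr J v) ^ 2 ≤ K ^ 2 * l2 (X *ᵥ v) ^ 2 := by
  rcases eq_or_ne v 0 with rfl | hv
  · simp [restr, l2]
  calc n * l2 (restr J v) ^ 2 = (√n * l2 (restr J v)) ^ 2 := by
        rw [mul_pow, Real.sq_sqrt (Nat.cast_nonneg _)]
    _ ≤ (K * l2 (X *ᵥ v)) ^ 2 :=
        pow_le_pow_left₀ (mul_nonneg (Real.sqrt_nonneg _) (l2_nonneg _)) (hRE J hJ v hv hcone) 2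
    _ = K ^ 2 * l2 (X *ᵥ v) ^ 2 := mul_pow _ _ _

end RestrictedEigenvalue

section Dantzig

open Matrix

variable {n p : ℕ} {X : Matrix (Fin n) (Fin p) ℝ}

def DantzigFeasible (X : Matrix (Fin n) (Fin p) ℝ) (Y : Fin n → ℝ) (lam : ℝ) (b : Fin p → ℝ) :
    Prop :=
  ∀ j, |(∑ i, X i j * (Y - X.mulVec b) i) / n| ≤ lam

lemma DantzigFeasible.abs_sum_mul_mulVec_sub_le {Y : Fin n → ℝ} {lam : ℝ} {b b' : Fin p → ℝ}
    (hn : 0 < n) (hb : DantzigFeasible X Y lam b) (hb' : DantzigFeasible X Y lam b') (j : Fin p) :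
    |∑ i, X i j * (X *ᵥ (b - b')) i| ≤ 2 * lam * n := by
  have hn' : (0 : ℝ) < n := by exact_mod_cast hn
  have h := hb j
  have h' := hb' j
  rw [abs_div, abs_of_pos hn', div_le_iff₀ hn'] at h h'
  have hdiff : ∑ i, X i j * (X *ᵥ (b - b')) i
      = ∑ i, X i j * (Y - X *ᵥ b') i - ∑ i, X i j * (Y - X *ᵥ b) i := by
    rw [← sum_sub_distrib]
    refine sum_congr rfl fun i _ => ?_
    simp only [Matrix.mulVec_sub, Pi.sub_apply]
    ring
  rw [hdiff]
  linarith [abs_sub (∑ i, X i j * (Y - X *ᵥ b') i) (∑ i, X i j * (Y - X *ᵥ b) i)]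

lemma sq_l2_mulVec_le_mul_l1 (X : Matrix (Fin n) (Fin p) ℝ) (v : Fin p → ℝ) {c : ℝ}
    (h : ∀ j, |∑ i, X i j * (X *ᵥ v) i| ≤ c) : l2 (X *ᵥ v) ^ 2 ≤ c * l1 v := by
  have hform : l2 (X *ᵥ v) ^ 2 = ∑ j, v j * ∑ i, X i j * (X *ᵥ v) i := by
    have := dotProduct_mulVec v Xᵀ (X *ᵥ v)
    rw [vecMul_transpose] at this
    rw [sq_l2]
    simpa [dotProduct, sq, mulVec, transpose_apply] using this.symm
  rw [hform, l1, mul_sum]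
  refine sum_le_sum fun j _ => ?_
  calc v j * ∑ i, X i j * (X *ᵥ v) i ≤ |v j| * |∑ i, X i j * (X *ᵥ v) i| := by
        rw [← abs_mul]; exact le_abs_self _
    _ ≤ |v j| * c := mul_le_mul_of_nonneg_left (h j) (abs_nonneg _)
    _ = c * |v j| := mul_comm _ _

/-- The cone condition: since `β` vanishes off `S`, an `ℓ¹`-smaller `b` can only gain mass
off `S` by losing at least as much on `S`. -/
lemma l1_restr_compl_sub_le_l1_restr_sub {S : Finset (Fin p)} {b β : Fin p → ℝ}
    (hβ : ∀ j ∉ S, β j = 0) (h : l1 b ≤ l1 β) :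
    l1 (restr Sᶜ (b - β)) ≤ l1 (restr S (b - β)) := by
  have hb := l1_restr_add_l1_restr_compl S b
  have hβ' := l1_restr_add_l1_restr_compl S β
  have hoff : l1 (restr Sᶜ (b - β)) = l1 (restr Sᶜ b) := by
    simp only [l1_restr]
    exact sum_congr rfl fun j hj => by simp [hβ j (mem_compl.1 hj)]
  have hβoff : l1 (restr Sᶜ β) = 0 := by
    simp only [l1_restr]
    exact sum_eq_zero fun j hj => by simp [hβ j (mem_compl.1 hj)]
  have hon : l1 (restr S β) ≤ l1 (restr S b) + l1 (restr S (b - β)) := by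
    simp only [l1_restr, ← sum_add_distrib, Pi.sub_apply]
    exact sum_le_sum fun j _ => by
      linarith [abs_sub_abs_le_abs_sub (β j) (b j), abs_sub_comm (β j) (b j)]
  linarith

lemma l1_le_two_mul_sqrt_mul_l2_restr {s : ℕ} {S : Finset (Fin p)} {v : Fin p → ℝ}
    (hS : #S ≤ s) (hcone : l1 (restr Sᶜ v) ≤ l1 (restr S v)) :
    l1 v ≤ 2 * √(s : ℝ) * l2 (restr S v) := by
  have hcs := l1_restr_le_sqrt_card_mul_l2_restr S v
  have hcard : √(#S : ℝ) * l2 (restr S v) ≤ √(s : ℝ) * l2 (restr S v) :=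
    mul_le_mul_of_nonneg_right (Real.sqrt_le_sqrt (by exact_mod_cast hS)) (l2_nonneg _)
  linarith [l1_restr_add_l1_restr_compl S v]

lemma sq_l2_restr_le_mul_l2_restr {s : ℕ} {K lam : ℝ} {S : Finset (Fin p)} {v : Fin p → ℝ}
    (hn : 0 < n) (hlam : 0 ≤ lam) (hRE : RestrictedEigenvalue X s 1 K)
    (hS : #S ≤ s) (hcone : l1 (restr Sᶜ v) ≤ l1 (restr S v))
    (hquad : l2 (X *ᵥ v) ^ 2 ≤ 2 * lam * n * l1 v)
    (J : Finset (Fin p)) (hJ : #J ≤ s) (hconeJ : l1 (restr Jᶜ v) ≤ l1 (restr J v)) :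
    l2 (restr J v) ^ 2 ≤ 4 * K ^ 2 * lam * √(s : ℝ) * l2 (restr S v) := by
  have hn' : (0 : ℝ) < n := by exact_mod_cast hn
  refine le_of_mul_le_mul_left ?_ hn'
  calc n * l2 (restr J v) ^ 2 ≤ K ^ 2 * l2 (X *ᵥ v) ^ 2 :=
        hRE.mul_sq_l2_restr_le hJ (by rwa [one_mul])
    _ ≤ K ^ 2 * (2 * lam * n * (2 * √(s : ℝ) * l2 (restr S v))) := by
        gcongr
        exact hquad.trans (by gcongr; exact l1_le_two_mul_sqrt_mul_l2_restr hS hcone)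
    _ = n * (4 * K ^ 2 * lam * √(s : ℝ) * l2 (restr S v)) := by ring

end Dantzig

theorem stmt17_general (n p s : ℕ) (hn : 1 ≤ n)
    (X : Matrix (Fin n) (Fin p) ℝ) (β βhat : Fin p → ℝ) (ε : Fin n → ℝ)
    (Y : Fin n → ℝ) (lam K : ℝ) (hlam : 0 < lam)
    (hY : Y = X.mulVec β + ε)
    (S : Finset (Fin p)) (hS : S = Finset.univ.filter fun j => β j ≠ 0)
    (hScard : S.card ≤ s)
    -- RE(s,1,X) with constant K = K(s,1,X)
    (hRE : ∀ J0 : Finset (Fin p), J0.card ≤ s → ∀ v : Fin p → ℝ, v ≠ 0 →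
      l1 (restr J0ᶜ v) ≤ 1 * l1 (restr J0 v) →
      Real.sqrt n * l2 (restr J0 v) ≤ K * l2 (X.mulVec v))
    -- λ ≥ ‖X^T ε / n‖_∞
    (hnoise : ∀ j, |(∑ i, X i j * ε i) / n| ≤ lam)
    -- β̂ is feasible for the Dantzig selector
    (hfeas : ∀ j, |(∑ i, X i j * (Y - X.mulVec βhat) i) / n| ≤ lam)
    -- β̂ is optimal among feasible points
    (hopt : ∀ b : Fin p → ℝ,
      (∀ j, |(∑ i, X i j * (Y - X.mulVec b) i) / n| ≤ lam) → l1 βhat ≤ l1 b) :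
    l2 (restr S (βhat - β)) ≤ 4 * K ^ 2 * lam * Real.sqrt s ∧
      l1 (βhat - β) ≤ 8 * K ^ 2 * lam * s ∧
      l2 (βhat - β) ≤ 12 * K ^ 2 * lam * Real.sqrt s := by
  set υ := βhat - β
  have hβ : DantzigFeasible X Y lam β := fun j => by rw [hY, add_sub_cancel_left]; exact hnoise j
  have hsupp : ∀ j ∉ S, β j = 0 := fun j hj => by simpa [hS] using hj
  have hcone := l1_restr_compl_sub_le_l1_restr_sub hsupp (hopt β hβ)
  have hquad := sq_l2_mulVec_le_mul_l1 X υ (DantzigFeasible.abs_sum_mul_mulVec_sub_le hn hfeas hβ)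
  have hbound := sq_l2_restr_le_mul_l2_restr hn hlam.le hRE hScard hcone hquad
  set c := 4 * K ^ 2 * lam * Real.sqrt s
  have hc : 0 ≤ c := by positivity
  have hA : l2 (restr S υ) ≤ c := by nlinarith [hbound S hScard hcone, l2_nonneg (restr S υ)]
  obtain ⟨T, hT, hmax⟩ := exists_card_le_forall_sum_le (fun i => |υ i|) s
  have hST : l1 (restr S υ) ≤ l1 (restr T υ) := by simpa only [l1_restr] using hmax S hScard
  have hconeT : l1 (restr Tᶜ υ) ≤ l1 (restr T υ) := by
    linarith [l1_restr_add_l1_restr_compl S υ, l1_restr_add_l1_restr_compl T υ]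
  have hB : l2 (restr T υ) ≤ c := (pow_le_pow_iff_left₀ (l2_nonneg _) hc two_ne_zero).1
    ((hbound T hT hconeT).trans (by rw [sq]; exact mul_le_mul_of_nonneg_left hA hc))
  have htail := l2_restr_compl_le_l2_restr
    (fun i hi j hj => le_of_forall_card_le_sum_le hT hmax hi hj) hconeT
  refine ⟨hA, ?_, ?_⟩
  · calc l1 υ ≤ 2 * Real.sqrt s * c := (l1_le_two_mul_sqrt_mul_l2_restr hScard hcone).trans
          (by gcongr)
      _ = 8 * K ^ 2 * lam * Real.sqrt s ^ 2 := by ring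
      _ = 8 * K ^ 2 * lam * s := by rw [Real.sq_sqrt (Nat.cast_nonneg _)]
  · linarith [l2_le_l2_restr_add_l2_restr_compl T υ]

/-- ℓ₂ and ℓ₁ bounds for the Dantzig selector under RE(s,1,X):
‖υ_S‖₂ ≤ 4K²λ√s, ‖υ‖₁ ≤ 8K²λs, ‖υ‖₂ ≤ 12K²λ√s. -/
theorem stmt17 (n p s : ℕ) (hn : 1 ≤ n) (hs : 1 ≤ s) (hsp : 2 * s ≤ p)
    (X : Matrix (Fin n) (Fin p) ℝ) (β βhat : Fin p → ℝ) (ε : Fin n → ℝ)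
    (Y : Fin n → ℝ) (lam θ K : ℝ) (hlam : 0 < lam) (hθ0 : 0 < θ) (hθ1 : θ < 1)
    (hK : 0 < K)
    (hY : Y = X.mulVec β + ε)
    (S : Finset (Fin p)) (hS : S = Finset.univ.filter fun j => β j ≠ 0)
    (hScard : S.card ≤ s)
    -- RE(s,1,X) with constant K = K(s,1,X)
    (hRE : ∀ J0 : Finset (Fin p), J0.card ≤ s → ∀ v : Fin p → ℝ, v ≠ 0 →
      l1 (restr J0ᶜ v) ≤ 1 * l1 (restr J0 v) →
      Real.sqrt n * l2 (restr J0 v) ≤ K * l2 (X.mulVec v))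
    -- column normalization
    (hcol : ∀ j, l2 (fun i => X i j) ≤ (1 + θ) * Real.sqrt n)
    -- λ ≥ ‖X^T ε / n‖_∞
    (hnoise : ∀ j, |(∑ i, X i j * ε i) / n| ≤ lam)
    -- β̂ is feasible for the Dantzig selector
    (hfeas : ∀ j, |(∑ i, X i j * (Y - X.mulVec βhat) i) / n| ≤ lam)
    -- β̂ is optimal among feasible points
    (hopt : ∀ b : Fin p → ℝ,
      (∀ j, |(∑ i, X i j * (Y - X.mulVec b) i) / n| ≤ lam) → l1 βhat ≤ l1 b) :
    l2 (restr S (βhat - β)) ≤ 4 * K ^ 2 * lam * Real.sqrt s ∧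
      l1 (βhat - β) ≤ 8 * K ^ 2 * lam * s ∧
      l2 (βhat - β) ≤ 12 * K ^ 2 * lam * Real.sqrt s :=
  stmt17_general n p s hn X β βhat ε Y lam K hlam hY S hS hScard hRE hnoise hfeas hopt
end
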